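/- For n ≥ 1, if a standard type B partition ρ' of ⟨n-1⟩ with 2k+1 blocks is extended by inserting n into block S_i and -n into its paired block (into S_0 if i = 0), giving a partition ρ of ⟨n⟩, then los_{B'}(ρ) = los_{B'}(ρ') + i for each choice 0 ≤ i ≤ 2k, and each such ρ is a standard type B partition of ⟨n⟩ with 2k+1 blocks. -/

import Mathlib

open Finset Polynomial

/-- The ground set ⟨n⟩ = {-n, ..., -1, 0, 1, ..., n}. -/
noncomputable def angleB (n : ℕ) : Finset ℤ := Finset.Icc (-(n : ℤ)) (n : ℤ)

/-- An ordered type B (signed) partition of ⟨n⟩ with 2k+1 blocks: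
pairwise disjoint nonempty blocks covering ⟨n⟩, with 0 ∈ S₀, S₀ closed under
negation, and S_{2i} = -S_{2i-1} for i ≥ 1. -/
def IsOrderedB (n k : ℕ) (S : Fin (2*k+1) → Finset ℤ) : Prop :=
  (∀ i, (S i).Nonempty) ∧
  (∀ i j, i ≠ j → Disjoint (S i) (S j)) ∧
  (Finset.univ.biUnion S = angleB n) ∧
  ((0 : ℤ) ∈ S 0) ∧
  (∀ x ∈ S 0, -x ∈ S 0) ∧
  (∀ i : ℕ, 1 ≤ i → ∀ h : 2*i < 2*k+1,
    S ⟨2*i, h⟩ = (S ⟨2*i-1, by omega⟩).image (fun x => -x))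

/-- m_j = min |S_j| (0 if the block is empty). -/
def mB {m : ℕ} (S : Fin m → Finset ℤ) (j : Fin m) : ℤ :=
  WithTop.untopD 0 (((S j).image (fun x => |x|)).min)

/-- M_j = max |S_j| (0 if the block is empty). -/
def MB {m : ℕ} (S : Fin m → Finset ℤ) (j : Fin m) : ℤ :=
  WithBot.unbotD 0 (((S j).image (fun x => |x|)).max)

/-- A standard type B partition: ordered, with m_{2i} ∈ S_{2i} for i ≥ 1 and
0 = m₀ < m₂ < m₄ < ... < m_{2k}. -/
def IsStandardB (n k : ℕ) (S : Fin (2*k+1) → Finset ℤ) : Prop :=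
  IsOrderedB n k S ∧
  (∀ i : ℕ, 1 ≤ i → ∀ h : 2*i < 2*k+1, mB S ⟨2*i, h⟩ ∈ S ⟨2*i, h⟩) ∧
  (∀ i : ℕ, ∀ h : 2*(i+1) < 2*k+1, mB S ⟨2*i, by omega⟩ < mB S ⟨2*(i+1), h⟩)

/-- inv ρ: number of pairs (s, S_j) with s ∈ S_i for some i < j and s ≥ m_j. -/
noncomputable def invB {m : ℕ} (S : Fin m → Finset ℤ) : ℕ :=
  {p : ℤ × Fin m | (∃ i < p.2, p.1 ∈ S i) ∧ mB S p.2 ≤ p.1}.ncard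

/-- ros_B = inv. -/
noncomputable def rosB {m : ℕ} (S : Fin m → Finset ℤ) : ℕ := invB S

/-- los_{B'}: pairs (s, S_j) with s ∈ S_i for some i > j and s ≥ m_j. -/
noncomputable def losB' {m : ℕ} (S : Fin m → Finset ℤ) : ℕ :=
  {p : ℤ × Fin m | (∃ i, p.2 < i ∧ p.1 ∈ S i) ∧ mB S p.2 ≤ p.1}.ncard

/-- lob_{B'}: pairs (s, S_j) with s ∈ S_i for some i > j and 0 < s ≤ m_j. -/
noncomputable def lobB' {m : ℕ} (S : Fin m → Finset ℤ) : ℕ :=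
  {p : ℤ × Fin m | (∃ i, p.2 < i ∧ p.1 ∈ S i) ∧ 0 < p.1 ∧ p.1 ≤ mB S p.2}.ncard

/-- rcb_B: pairs (s, S_j) with s ∈ S_i for some i < j and 0 < s ≤ M_j. -/
noncomputable def rcbB {m : ℕ} (S : Fin m → Finset ℤ) : ℕ :=
  {p : ℤ × Fin m | (∃ i < p.2, p.1 ∈ S i) ∧ 0 < p.1 ∧ p.1 ≤ MB S p.2}.ncard

/-- rob_B: pairs (s, S_j) with s ∈ S_i for some i < j and 0 < s ≤ m_j. -/
noncomputable def robB {m : ℕ} (S : Fin m → Finset ℤ) : ℕ :=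
  {p : ℤ × Fin m | (∃ i < p.2, p.1 ∈ S i) ∧ 0 < p.1 ∧ p.1 ≤ mB S p.2}.ncard

/-- rcs_B: pairs (s, S_j) with s ∈ S_i for some i < j and s ≥ M_j. -/
noncomputable def rcsB {m : ℕ} (S : Fin m → Finset ℤ) : ℕ :=
  {p : ℤ × Fin m | (∃ i < p.2, p.1 ∈ S i) ∧ MB S p.2 ≤ p.1}.ncard

/-- Type B Stirling numbers of the second kind. -/
def StirB : ℕ → ℕ → ℕ
  | 0, 0 => 1
  | 0, _+1 => 0
  | n+1, 0 => StirB n 0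
  | n+1, k+1 => StirB n k + (2*(k+1)+1) * StirB n (k+1)

/-- [m] = 1 + q + ... + q^{m-1}. -/
noncomputable def qb (m : ℕ) : Polynomial ℤ := ∑ i ∈ Finset.range m, (Polynomial.X : Polynomial ℤ) ^ i

/-- Type B q-Stirling numbers of the second kind. -/
noncomputable def qStirB : ℕ → ℕ → Polynomial ℤ
  | 0, 0 => 1
  | 0, _+1 => 0
  | n+1, 0 => qStirB n 0
  | n+1, k+1 => qStirB n k + qb (2*(k+1)+1) * qStirB n (k+1)

/-- [2k]!! = [2k][2k-2]⋯[2]. -/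
noncomputable def qdf : ℕ → Polynomial ℤ
  | 0 => 1
  | k+1 => qb (2*(k+1)) * qdf k

/-- The complement map on ⟨n⟩: i ↦ n+1-i for i > 0, -i ↦ -(n+1-i), 0 ↦ 0. -/
def complB (n : ℕ) (x : ℤ) : ℤ :=
  if 0 < x then (n : ℤ) + 1 - x else if x < 0 then -((n : ℤ) + 1) - x else 0

/-- Complement of a partition, blockwise. -/
def complP (n : ℕ) {m : ℕ} (S : Fin m → Finset ℤ) : Fin m → Finset ℤ :=
  fun j => (S j).image (complB n)

/-- The index of the block paired with block i: 0 ↦ 0, 2ℓ-1 ↦ 2ℓ, 2ℓ ↦ 2ℓ-1. -/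
def pairIdx (k : ℕ) (i : Fin (2*k+1)) : Fin (2*k+1) :=
  if i.val = 0 then i
  else if h2 : i.val % 2 = 1 then ⟨i.val + 1, by omega⟩ else ⟨i.val - 1, by omega⟩

/-! Since `n + 1` exceeds `|x|` for every `x ∈ ⟨n⟩`, inserting `±(n + 1)` changes no block
minimum `m_j`, so every condition of a standard partition survives. The same fact decides the
new pairs counted by `los_{B'}`: `(n + 1, S_j)` counts exactly when `n + 1` lies in a later block,
i.e. for the `i` blocks `j < i`, while `-(n + 1) < 0 ≤ m_j` never counts. -/

lemma mB_nonneg {m : ℕ} (S : Fin m → Finset ℤ) (j : Fin m) : 0 ≤ mB S j := by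
  unfold mB
  cases h : ((S j).image (fun x => |x|)).min with
  | top => rfl
  | coe a =>
    obtain ⟨x, -, rfl⟩ := mem_image.1 (mem_of_min h)
    exact abs_nonneg x

lemma mB_le_abs {m : ℕ} {S : Fin m → Finset ℤ} {j : Fin m} {x : ℤ} (hx : x ∈ S j) :
    mB S j ≤ |x| := by
  have hne : ((S j).image (fun x => |x|)).Nonempty := ⟨_, mem_image_of_mem _ hx⟩
  rw [mB, ← coe_min' hne, WithTop.untopD_coe]
  exact min'_le _ _ (mem_image_of_mem _ hx)

lemma mB_eq_of_subset {m : ℕ} {S T : Fin m → Finset ℤ} {j : Fin m} (hST : S j ⊆ T j)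
    (hnew : ∀ x ∈ T j, x ∉ S j → ∃ y ∈ S j, |y| ≤ |x|) : mB T j = mB S j := by
  unfold mB
  congr 1
  refine le_antisymm (min_mono (image_subset_image hST)) (Finset.le_min ?_)
  intro b hb
  obtain ⟨x, hx, rfl⟩ := mem_image.1 hb
  by_cases hxS : x ∈ S j
  · exact min_le (mem_image_of_mem _ hxS)
  · obtain ⟨y, hy, hyx⟩ := hnew x hx hxS
    exact (min_le (mem_image_of_mem _ hy)).trans (WithTop.coe_le_coe.2 hyx)

lemma pairIdx_involutive (k : ℕ) : Function.Involutive (pairIdx k) := by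
  intro i
  unfold pairIdx
  split_ifs <;> simp only [Fin.ext_iff] at * <;> (try dsimp only at *) <;> omega

lemma pairIdx_zero (k : ℕ) : pairIdx k 0 = 0 := by
  simp [pairIdx]

lemma pairIdx_two_mul {k ℓ : ℕ} (hℓ : 1 ≤ ℓ) (h : 2*ℓ < 2*k+1) :
    pairIdx k ⟨2*ℓ, h⟩ = ⟨2*ℓ-1, by omega⟩ := by
  unfold pairIdx
  split_ifs <;> simp only [Fin.ext_iff] at * <;> (try dsimp only at *) <;> omega

def insertB (n k : ℕ) (S : Fin (2*k+1) → Finset ℤ) (i : Fin (2*k+1)) :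
    Fin (2*k+1) → Finset ℤ :=
  fun t => S t ∪ (if t = i then {((n : ℤ)+1)} else ∅)
    ∪ (if t = pairIdx k i then {-((n : ℤ)+1)} else ∅)

lemma mem_insertB {n k : ℕ} {S : Fin (2*k+1) → Finset ℤ} {i t : Fin (2*k+1)} {x : ℤ} :
    x ∈ insertB n k S i t ↔
      x ∈ S t ∨ (x = (n : ℤ)+1 ∧ t = i) ∨ (x = -((n : ℤ)+1) ∧ t = pairIdx k i) := by
  simp only [insertB, mem_union]
  grind

lemma subset_insertB (n k : ℕ) (S : Fin (2*k+1) → Finset ℤ) (i t : Fin (2*k+1)) :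
    S t ⊆ insertB n k S i t :=
  fun _ hx => mem_insertB.2 (Or.inl hx)

namespace IsOrderedB

variable {n k : ℕ} {S : Fin (2*k+1) → Finset ℤ}

lemma abs_le (hS : IsOrderedB n k S) {j : Fin (2*k+1)} {x : ℤ} (hx : x ∈ S j) : |x| ≤ n := by
  have : x ∈ angleB n := hS.2.2.1 ▸ mem_biUnion.2 ⟨j, mem_univ _, hx⟩
  exact _root_.abs_le.2 (mem_Icc.1 this)

lemma add_one_notMem (hS : IsOrderedB n k S) (j : Fin (2*k+1)) : (n : ℤ) + 1 ∉ S j := by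
  intro h
  have := hS.abs_le h
  rw [abs_of_pos (by positivity)] at this
  omega

lemma neg_add_one_notMem (hS : IsOrderedB n k S) (j : Fin (2*k+1)) : -((n : ℤ) + 1) ∉ S j := by
  intro h
  have := hS.abs_le h
  rw [abs_neg, abs_of_pos (by positivity)] at this
  omega

lemma mB_insertB (hS : IsOrderedB n k S) (i j : Fin (2*k+1)) :
    mB (insertB n k S i) j = mB S j := by
  refine mB_eq_of_subset (subset_insertB n k S i j) fun x hx hxS => ?_
  obtain ⟨y, hy⟩ := hS.1 j
  refine ⟨y, hy, (hS.abs_le hy).trans ?_⟩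
  rcases mem_insertB.1 hx with h | ⟨rfl, -⟩ | ⟨rfl, -⟩
  · exact absurd h hxS
  · rw [abs_of_pos (by positivity)]; omega
  · rw [abs_neg, abs_of_pos (by positivity)]; omega

lemma disjoint_insertB (hS : IsOrderedB n k S) (i : Fin (2*k+1)) {a b : Fin (2*k+1)} (hab : a ≠ b) :
    Disjoint (insertB n k S i a) (insertB n k S i b) := by
  have hSab := disjoint_left.1 (hS.2.1 a b hab)
  have := hS.add_one_notMem
  have := hS.neg_add_one_notMem
  rw [disjoint_left]
  intro x hxa hxb
  rw [mem_insertB] at hxa hxb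
  grind

lemma biUnion_insertB (hS : IsOrderedB n k S) (i : Fin (2*k+1)) :
    univ.biUnion (insertB n k S i) = angleB (n+1) := by
  have hcov : ∀ x, (∃ t, x ∈ S t) ↔ -(n : ℤ) ≤ x ∧ x ≤ n := fun x => by
    simpa [angleB] using congrArg (x ∈ ·) hS.2.2.1
  ext x
  simp only [mem_biUnion, mem_univ, true_and, mem_insertB, angleB, mem_Icc]
  push_cast
  constructor
  · rintro ⟨t, hx | ⟨rfl, -⟩ | ⟨rfl, -⟩⟩
    · have := (hcov x).1 ⟨t, hx⟩
      omega
    all_goals omega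
  · intro hx
    by_cases hpos : x = n + 1
    · exact ⟨i, Or.inr (Or.inl ⟨hpos, rfl⟩)⟩
    by_cases hneg : x = -(n + 1)
    · exact ⟨pairIdx k i, Or.inr (Or.inr ⟨hneg, rfl⟩)⟩
    obtain ⟨t, ht⟩ := (hcov x).2 (by omega)
    exact ⟨t, Or.inl ht⟩

lemma neg_mem_insertB_zero (hS : IsOrderedB n k S) (i : Fin (2*k+1)) {x : ℤ}
    (hx : x ∈ insertB n k S i 0) : -x ∈ insertB n k S i 0 := by
  obtain ⟨-, -, -, -, hneg, -⟩ := hS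
  have hi : pairIdx k i = 0 ↔ i = 0 := by rw [(pairIdx_involutive k).eq_iff, pairIdx_zero]
  rw [mem_insertB] at hx ⊢
  rcases hx with hx | ⟨rfl, rfl⟩ | ⟨rfl, h⟩
  · exact Or.inl (hneg x hx)
  · exact Or.inr (Or.inr ⟨rfl, (pairIdx_zero k).symm⟩)
  · exact Or.inr (Or.inl ⟨neg_neg _, (hi.1 h.symm).symm⟩)

lemma insertB_two_mul (hS : IsOrderedB n k S) (i : Fin (2*k+1)) {ℓ : ℕ} (hℓ : 1 ≤ ℓ)
    (h : 2*ℓ < 2*k+1) :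
    insertB n k S i ⟨2*ℓ, h⟩ = (insertB n k S i ⟨2*ℓ-1, by omega⟩).image (fun x => -x) := by
  obtain ⟨-, -, -, -, -, hpair⟩ := hS
  have heven : (⟨2*ℓ, h⟩ = pairIdx k i) ↔ (⟨2*ℓ-1, by omega⟩ = i) := by
    rw [eq_comm, (pairIdx_involutive k).eq_iff, pairIdx_two_mul hℓ h, eq_comm]
  have hodd : (⟨2*ℓ-1, by omega⟩ = pairIdx k i) ↔ (⟨2*ℓ, h⟩ = i) := by
    rw [eq_comm, (pairIdx_involutive k).eq_iff, ← pairIdx_two_mul hℓ h, pairIdx_involutive k,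
      eq_comm]
  ext x
  simp only [image_neg_eq_neg, mem_neg', mem_insertB, hpair ℓ hℓ h, heven, hodd,
    neg_eq_iff_eq_neg, neg_neg]
  tauto

lemma setOf_los_insertB (hS : IsOrderedB n k S) (i : Fin (2*k+1)) :
    {p : ℤ × Fin (2*k+1) | (∃ i', p.2 < i' ∧ p.1 ∈ insertB n k S i i') ∧
        mB (insertB n k S i) p.2 ≤ p.1} =
      {p : ℤ × Fin (2*k+1) | (∃ i', p.2 < i' ∧ p.1 ∈ S i') ∧ mB S p.2 ≤ p.1} ∪
        Prod.mk ((n : ℤ) + 1) '' Set.Iio i := by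
  ext ⟨x, j⟩
  obtain ⟨y, hy⟩ := hS.1 j
  have hm0 := mB_nonneg S j
  have hmn := (mB_le_abs hy).trans (hS.abs_le hy)
  simp only [Set.mem_ofPred_eq, Set.mem_union, Set.mem_image, Set.mem_Iio, Prod.mk.injEq,
    hS.mB_insertB, mem_insertB]
  grind

lemma losB'_insertB (hS : IsOrderedB n k S) (i : Fin (2*k+1)) :
    losB' (insertB n k S i) = losB' S + i := by
  have hfin : {p : ℤ × Fin (2*k+1) | (∃ i', p.2 < i' ∧ p.1 ∈ S i') ∧ mB S p.2 ≤ p.1}.Finite := by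
    refine ((angleB n).finite_toSet.prod Set.finite_univ).subset ?_
    rintro ⟨x, j⟩ ⟨⟨i', -, hx⟩, -⟩
    exact ⟨hS.2.2.1 ▸ mem_biUnion.2 ⟨i', mem_univ _, hx⟩, trivial⟩
  have hdisj : Disjoint {p : ℤ × Fin (2*k+1) | (∃ i', p.2 < i' ∧ p.1 ∈ S i') ∧ mB S p.2 ≤ p.1}
      (Prod.mk ((n : ℤ) + 1) '' Set.Iio i) := by
    rw [Set.disjoint_left]
    rintro _ ⟨⟨i', -, hx⟩, -⟩ ⟨j, -, rfl⟩
    exact hS.add_one_notMem i' hx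
  rw [losB', losB', hS.setOf_los_insertB i, Set.ncard_union_eq hdisj hfin (Set.toFinite _),
    Set.ncard_image_of_injective _ (Prod.mk_right_injective _), ← coe_Iio, Set.ncard_coe_finset,
    Fin.card_Iio]

lemma insertB (hS : IsOrderedB n k S) (i : Fin (2*k+1)) : IsOrderedB (n+1) k (insertB n k S i) :=
  ⟨fun t => (hS.1 t).mono (subset_insertB n k S i t), fun _ _ => hS.disjoint_insertB i,
    hS.biUnion_insertB i, subset_insertB n k S i 0 hS.2.2.2.1,
    fun _ => hS.neg_mem_insertB_zero i, fun _ hℓ h => hS.insertB_two_mul i hℓ h⟩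

end IsOrderedB

lemma IsStandardB.insertB {n k : ℕ} {S : Fin (2*k+1) → Finset ℤ} (hS : IsStandardB n k S)
    (i : Fin (2*k+1)) : IsStandardB (n+1) k (insertB n k S i) := by
  obtain ⟨hO, hmem, hlt⟩ := hS
  refine ⟨hO.insertB i, fun ℓ hℓ h => ?_, fun ℓ h => ?_⟩
  · rw [hO.mB_insertB]
    exact subset_insertB n k S i _ (hmem ℓ hℓ h)
  · rw [hO.mB_insertB, hO.mB_insertB]
    exact hlt ℓ h

/-- inserting n+1 into block S_i and -(n+1) into its paired block
(both into S₀ if i = 0) of a standard type B partition of ⟨n⟩ yields a standard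
type B partition of ⟨n+1⟩ with los_{B'} increased by exactly i. -/
theorem stmt18 (n k : ℕ) (S : Fin (2*k+1) → Finset ℤ)
    (hS : IsStandardB n k S) (i : Fin (2*k+1)) :
    IsStandardB (n+1) k
      (fun t => S t ∪ (if t = i then {((n : ℤ)+1)} else ∅)
        ∪ (if t = pairIdx k i then {-((n : ℤ)+1)} else ∅)) ∧
    losB' (fun t => S t ∪ (if t = i then {((n : ℤ)+1)} else ∅)
        ∪ (if t = pairIdx k i then {-((n : ℤ)+1)} else ∅)) = losB' S + i.val :=
  ⟨hS.insertB i, hS.1.losB'_insertB i⟩
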